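/- arXiv:2304.06973 — 2 statements merged into one kernel-verified Lean document; each statement's English description precedes it below -/
import Mathlib

section
/- Let a, b, c, g be real numbers with a > 0, b > 0, g ≥ 0. If cosh(g) = sinh(a)·sinh(b)·cosh(c) − cosh(a)·cosh(b) and cosh(c) ≤ 3, then g < a + b. -/
/-!
Since `|sinh x| < cosh x`, the hypothesis `cosh c ≤ 3` gives
`sinh a sinh b (cosh c - 1) ≤ 2 |sinh a sinh b| < 2 cosh a cosh b`, i.e. the right-hand side of the
hexagon relation is smaller than `cosh a cosh b + sinh a sinh b = cosh (a + b)`.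
As `cosh` is strictly increasing in `|·|`, this yields `|g| < a + b`.
-/

namespace Real

theorem abs_sinh_lt_cosh (x : ℝ) : |sinh x| < cosh x :=
  abs_lt.2 ⟨by linarith [cosh_add_sinh x, exp_pos x], by linarith [cosh_sub_sinh x, exp_pos (-x)]⟩

theorem abs_sinh_mul_sinh_lt_cosh_mul_cosh (a b : ℝ) : |sinh a * sinh b| < cosh a * cosh b := by
  rw [abs_mul]
  exact mul_lt_mul'' (abs_sinh_lt_cosh a) (abs_sinh_lt_cosh b) (abs_nonneg _) (abs_nonneg _)

theorem sinh_mul_sinh_mul_cosh_sub_lt_cosh_add {a b c : ℝ} (hc : cosh c ≤ 3) :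
    sinh a * sinh b * cosh c - cosh a * cosh b < cosh (a + b) := by
  set p := sinh a * sinh b
  have hp : |p| < cosh a * cosh b := abs_sinh_mul_sinh_lt_cosh_mul_cosh a b
  have hc₁ : 0 ≤ cosh c - 1 := sub_nonneg.2 (one_le_cosh c)
  have hpc : p * (cosh c - 1) ≤ 2 * |p| :=
    calc p * (cosh c - 1) ≤ |p| * (cosh c - 1) := mul_le_mul_of_nonneg_right (le_abs_self p) hc₁
      _ ≤ |p| * 2 := mul_le_mul_of_nonneg_left (by linarith) (abs_nonneg p)
      _ = 2 * |p| := mul_comm _ _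
  rw [cosh_add]
  linarith

end Real

theorem stmt_1_general (a b c g : ℝ) (ha : 0 < a) (hb : 0 < b)
    (hhex : Real.cosh g = Real.sinh a * Real.sinh b * Real.cosh c - Real.cosh a * Real.cosh b)
    (hc : Real.cosh c ≤ 3) : g < a + b := by
  have hcosh : Real.cosh g < Real.cosh (a + b) :=
    hhex ▸ Real.sinh_mul_sinh_mul_cosh_sub_lt_cosh_add hc
  calc g ≤ |g| := le_abs_self g
    _ < |a + b| := Real.cosh_lt_cosh.1 hcosh
    _ = a + b := abs_of_pos (add_pos ha hb)

theorem stmt_1 (a b c g : ℝ) (ha : 0 < a) (hb : 0 < b) (hg : 0 ≤ g)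
    (hhex : Real.cosh g = Real.sinh a * Real.sinh b * Real.cosh c - Real.cosh a * Real.cosh b)
    (hc : Real.cosh c ≤ 3) : g < a + b :=
  stmt_1_general a b c g ha hb hhex hc
end

section
/- Let a, b, h, x, y be real numbers with a > 0, b > 0, x > 0, y > 0, and 0 < h ≤ 2·arsinh(1). If sinh(x)·sinh(h/2) = cosh(a/2) and sinh(y)·sinh(h/2) = cosh(b/2), then x + y > (a + b)/2. -/
/-! The constraint `h ≤ 2 arsinh 1` means `sinh (h/2) ≤ 1`, so each pentagon relation gives
`cosh (a/2) ≤ sinh x`; as `sinh (a/2) < cosh (a/2)` and `sinh` is strictly increasing, `a/2 < x`. -/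

open Real

theorem Real.sinh_half_le_one_of_le_two_mul_arsinh_one {h : ℝ} (hh : h ≤ 2 * arsinh 1) :
    sinh (h / 2) ≤ 1 := by
  simpa only [sinh_arsinh] using sinh_le_sinh.mpr (show h / 2 ≤ arsinh 1 by linarith)

theorem Real.lt_of_sinh_mul_eq_cosh {s t u : ℝ} (hs0 : 0 ≤ s) (hs1 : s ≤ 1)
    (hst : sinh u * s = cosh t) : t < u := by
  have hu : 0 < sinh u := pos_of_mul_pos_left (hst ▸ cosh_pos t) hs0
  have hcosh : cosh t ≤ sinh u :=
    hst ▸ mul_le_of_le_one_right hu.le hs1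
  exact sinh_lt_sinh.mp ((sinh_lt_cosh t).trans_le hcosh)

theorem stmt_4_general (a b h x y : ℝ)
    (hh : 0 < h) (hh2 : h ≤ 2 * Real.arsinh 1)
    (hpx : Real.sinh x * Real.sinh (h / 2) = Real.cosh (a / 2))
    (hpy : Real.sinh y * Real.sinh (h / 2) = Real.cosh (b / 2)) :
    x + y > (a + b) / 2 := by
  have hs0 : 0 ≤ sinh (h / 2) := sinh_nonneg_iff.mpr (by linarith)
  have hs1 := sinh_half_le_one_of_le_two_mul_arsinh_one hh2
  have hax := lt_of_sinh_mul_eq_cosh hs0 hs1 hpx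
  have hby := lt_of_sinh_mul_eq_cosh hs0 hs1 hpy
  linarith

theorem stmt_4 (a b h x y : ℝ) (ha : 0 < a) (hb : 0 < b) (hx : 0 < x) (hy : 0 < y)
    (hh : 0 < h) (hh2 : h ≤ 2 * Real.arsinh 1)
    (hpx : Real.sinh x * Real.sinh (h / 2) = Real.cosh (a / 2))
    (hpy : Real.sinh y * Real.sinh (h / 2) = Real.cosh (b / 2)) :
    x + y > (a + b) / 2 :=
  stmt_4_general a b h x y hh hh2 hpx hpy
end
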